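/- The Sheffer function (NOR) on the two-element set, i.e. the binary operation on {0,1} defined by 0|0 = 1 and x|y = 0 otherwise (equivalently x|y = ¬(x ∨ y) on Booleans), is a Catalan operation: any two distinct bracketings of the same size induce distinct regular operations over it. (Paper's Proposition 4.2.) -/

import Mathlib

/-- A bracketing of size `n`: a full binary tree with `n` leaves. -/
inductive Bracketing : ℕ → Type
  | leaf : Bracketing 1
  | node : {k l : ℕ} → Bracketing k → Bracketing l → Bracketing (k + l)

/-- The `n`-ary regular operation induced by a bracketing on a magma `(G, op)`. -/
def Bracketing.eval {G : Type*} (op : G → G → G) : {n : ℕ} → Bracketing n → (Fin n → G) → G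
  | _, .leaf, v => v 0
  | _, .node P Q, v =>
      op (Bracketing.eval op P (fun i => v (Fin.castAdd _ i)))
         (Bracketing.eval op Q (fun i => v (Fin.natAdd _ i)))

/-- The associative spectrum: the number of distinct `n`-ary regular operations. -/
noncomputable def assocSpectrum {G : Type*} (op : G → G → G) (n : ℕ) : ℕ :=
  Nat.card {f : (Fin n → G) → G // ∃ B : Bracketing n, f = Bracketing.eval op B}

/-- The depth of the `i`-th leaf of a bracketing. -/
def Bracketing.depth : {n : ℕ} → Bracketing n → Fin n → ℕ
  | _, .leaf, _ => 0
  | _, .node (k := k) P Q, i =>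
      if h : (i : ℕ) < k then Bracketing.depth P ⟨i, h⟩ + 1
      else Bracketing.depth Q ⟨(i : ℕ) - k, by have := i.isLt; omega⟩ + 1

/-- The right depth of the `i`-th leaf of a bracketing. -/
def Bracketing.rdepth : {n : ℕ} → Bracketing n → Fin n → ℕ
  | _, .leaf, _ => 0
  | _, .node (k := k) P Q, i =>
      if h : (i : ℕ) < k then Bracketing.rdepth P ⟨i, h⟩
      else Bracketing.rdepth Q ⟨(i : ℕ) - k, by have := i.isLt; omega⟩ + 1

/-- The left depth of the `i`-th leaf of a bracketing. -/
def Bracketing.ldepth : {n : ℕ} → Bracketing n → Fin n → ℕ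
  | _, .leaf, _ => 0
  | _, .node (k := k) P Q, i =>
      if h : (i : ℕ) < k then Bracketing.ldepth P ⟨i, h⟩ + 1
      else Bracketing.ldepth Q ⟨(i : ℕ) - k, by have := i.isLt; omega⟩

/-- A magma operation is Catalan if distinct bracketings of equal size
    induce distinct regular operations. -/
def IsCatalanOp {G : Type*} (op : G → G → G) : Prop :=
  ∀ (n : ℕ) (B₁ B₂ : Bracketing n), B₁ ≠ B₂ →
    Bracketing.eval op B₁ ≠ Bracketing.eval op B₂

/-!
Evaluating bracketings on infinite input sequences puts inputs of all lengths in one type.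
Under NOR, `!⟦node P Q⟧ f = ⟦P⟧ f || ⟦Q⟧ (f shifted by the size of P)`, and every bracketing
takes both values and depends on its first input. If one operation had two such OR-splittings,
at positions `k < k'`, then choosing the first block so that `⟦P⟧` vanishes writes `⟦Q⟧` as
`R b || ⟦Q'⟧ c` over consecutive blocks `b`, `c`. At the root of `Q` this forces `R = false`,
so `⟦Q⟧` ignores its first input, which is absurd. Hence the operation determines the root
split of the bracketing, and by induction the whole bracketing.
-/

def seqConcat {α : Type*} (k : ℕ) (a b : ℕ → α) (j : ℕ) : α :=
  if j < k then a j else b (j - k)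

section seqConcat

variable {α : Type*} {k : ℕ} {a b : ℕ → α}

lemma seqConcat_of_lt {j : ℕ} (hj : j < k) : seqConcat k a b j = a j := if_pos hj

@[simp]
lemma seqConcat_add (j : ℕ) : seqConcat k a b (k + j) = b j := by
  simp [seqConcat]

lemma seqConcat_self (f : ℕ → α) : seqConcat k f (fun j => f (k + j)) = f := by
  funext j
  by_cases hj : j < k
  · exact seqConcat_of_lt hj
  · simp only [seqConcat, hj, if_false]
    congr 1
    omega

end seqConcat

lemma Bool.eq_and_eq_of_or_eq {α β : Type*} {p p' : α → Bool} {q q' : β → Bool}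
    (hp : ∃ a, p a = false) (hq : ∃ b, q b = false)
    (h : ∀ a b, (p a || q b) = (p' a || q' b)) : p = p' ∧ q = q' := by
  obtain ⟨a₀, ha₀⟩ := hp
  obtain ⟨b₀, hb₀⟩ := hq
  have h₀ := h a₀ b₀
  rw [ha₀, hb₀, Bool.false_or, eq_comm, Bool.or_eq_false_iff] at h₀
  refine ⟨funext fun a => ?_, funext fun b => ?_⟩
  · simpa [hb₀, h₀.2] using h a b₀
  · simpa [ha₀, h₀.1] using h a₀ b

def nor (x y : Bool) : Bool := !(x || y)

namespace Bracketing

lemma size_pos {n : ℕ} (B : Bracketing n) : 0 < n := by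
  induction B <;> omega

section evalSeq

variable {G : Type*}

def evalSeq (op : G → G → G) {n : ℕ} (B : Bracketing n) (f : ℕ → G) : G :=
  B.eval op fun i => f i

variable (op : G → G → G)

@[simp]
lemma evalSeq_leaf (f : ℕ → G) : leaf.evalSeq op f = f 0 := rfl

lemma evalSeq_node {k l : ℕ} (P : Bracketing k) (Q : Bracketing l) (f : ℕ → G) :
    (node P Q).evalSeq op f = op (P.evalSeq op f) (Q.evalSeq op fun j => f (k + j)) := by
  simp only [evalSeq, eval, Fin.val_castAdd, Fin.val_natAdd]

lemma evalSeq_congr {n : ℕ} (B : Bracketing n) {f g : ℕ → G} (h : ∀ j < n, f j = g j) :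
    B.evalSeq op f = B.evalSeq op g := by
  simp only [evalSeq, funext fun i : Fin n => h i i.isLt]

lemma evalSeq_seqConcat_of_le {m k : ℕ} (P : Bracketing m) (hmk : m ≤ k) (a b : ℕ → G) :
    P.evalSeq op (seqConcat k a b) = P.evalSeq op a :=
  P.evalSeq_congr op fun _ hj => seqConcat_of_lt (by omega)

@[simp]
lemma evalSeq_node_seqConcat {k l : ℕ} (P : Bracketing k) (Q : Bracketing l) (a b : ℕ → G) :
    (node P Q).evalSeq op (seqConcat k a b) = op (P.evalSeq op a) (Q.evalSeq op b) := by
  simp [evalSeq_node, evalSeq_seqConcat_of_le op P le_rfl]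

end evalSeq

lemma evalSeq_nor_surjective {n : ℕ} (B : Bracketing n) : Function.Surjective (B.evalSeq nor) := by
  induction B with
  | leaf => exact fun b => ⟨fun _ => b, rfl⟩
  | @node k l P Q ihP ihQ =>
    rintro (_ | _)
    · obtain ⟨a, ha⟩ := ihP true
      exact ⟨seqConcat k a a, by simp [nor, ha]⟩
    · obtain ⟨a, ha⟩ := ihP false
      obtain ⟨b, hb⟩ := ihQ false
      exact ⟨seqConcat k a b, by simp [nor, ha, hb]⟩

lemma evalSeq_nor_depends_zero {n : ℕ} (B : Bracketing n) :
    ∃ f g : ℕ → Bool, (∀ j, j ≠ 0 → f j = g j) ∧ B.evalSeq nor f ≠ B.evalSeq nor g := by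
  induction B with
  | leaf => exact ⟨fun j => decide (j = 0), fun _ => false, fun j hj => by simp [hj], by simp⟩
  | @node k l P Q ihP _ =>
    obtain ⟨f, g, hfg, hne⟩ := ihP
    obtain ⟨w, hw⟩ := Q.evalSeq_nor_surjective false
    refine ⟨seqConcat k f w, seqConcat k g w, fun j hj => ?_, by simpa [nor, hw] using hne⟩
    simp only [seqConcat]
    split_ifs
    exacts [hfg j hj, rfl]

/-- A NOR node is `false` as soon as one child is `true`, and one of the two children reads inputs
from only one of the blocks `b`, `c`. -/
lemma evalSeq_nor_ne_or {n t : ℕ} (B : Bracketing n) {R S : (ℕ → Bool) → Bool}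
    (hR : ∃ b, R b = true) (hS : ∃ c, S c = true) :
    ¬ ∀ b c, B.evalSeq nor (seqConcat t b c) = (R b || S c) := by
  intro h
  obtain ⟨b₁, hb₁⟩ := hR
  obtain ⟨c₁, hc₁⟩ := hS
  cases B with
  | leaf =>
    rcases Nat.eq_zero_or_pos t with rfl | ht
    · simpa [seqConcat, hb₁] using h b₁ fun _ => false
    · simpa [seqConcat, ht, hc₁] using h (fun _ => false) c₁
  | @node s _ Q₁ Q₂ =>
    rcases le_or_gt s t with hst | hts
    · obtain ⟨b, hb⟩ := Q₁.evalSeq_nor_surjective true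
      simpa [evalSeq_node, evalSeq_seqConcat_of_le _ Q₁ hst, nor, hb, hc₁] using h b c₁
    · obtain ⟨m, rfl⟩ := Nat.exists_eq_add_of_le hts.le
      obtain ⟨g, hg⟩ := Q₂.evalSeq_nor_surjective true
      simpa [evalSeq_node, Nat.add_assoc, nor, hg, hb₁] using h b₁ (seqConcat m b₁ g)

lemma false_of_or_split_lt {k l k' l' : ℕ} (P : Bracketing k) (Q : Bracketing l)
    (P' : Bracketing k') (Q' : Bracketing l') (hsize : k + l = k' + l') (hk : k < k')
    (h : ∀ f, (P.evalSeq nor f || Q.evalSeq nor fun j => f (k + j)) =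
      (P'.evalSeq nor f || Q'.evalSeq nor fun j => f (k' + j))) : False := by
  obtain ⟨t, rfl⟩ := Nat.exists_eq_add_of_le hk.le
  obtain rfl : l = t + l' := by omega
  obtain ⟨a₀, ha₀⟩ := P.evalSeq_nor_surjective false
  have hP' : ∀ b c, P'.evalSeq nor (seqConcat k a₀ (seqConcat t b c)) =
      P'.evalSeq nor (seqConcat k a₀ b) := fun b c =>
    P'.evalSeq_congr nor fun j hj => by simp only [seqConcat]; split_ifs <;> first | rfl | omega
  have hQ : ∀ b c, Q.evalSeq nor (seqConcat t b c) =
      (P'.evalSeq nor (seqConcat k a₀ b) || Q'.evalSeq nor c) := fun b c => by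
    simpa [evalSeq_seqConcat_of_le _ P le_rfl, ha₀, hP', Nat.add_assoc]
      using h (seqConcat k a₀ (seqConcat t b c))
  by_cases hR : ∃ b, P'.evalSeq nor (seqConcat k a₀ b) = true
  · exact Q.evalSeq_nor_ne_or hR (Q'.evalSeq_nor_surjective true) hQ
  · simp only [not_exists, Bool.not_eq_true] at hR
    have hQ' : ∀ f, Q.evalSeq nor f = Q'.evalSeq nor fun j => f (t + j) := fun f => by
      conv_lhs => rw [← seqConcat_self (k := t) f]
      rw [hQ, hR, Bool.false_or]
    obtain ⟨f, g, hfg, hne⟩ := Q.evalSeq_nor_depends_zero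
    exact hne (by rw [hQ', hQ']; exact congrArg _ (funext fun j => hfg _ (by omega)))

theorem heq_of_evalSeq_nor_eq {m n : ℕ} (B₁ : Bracketing m) (B₂ : Bracketing n) (hmn : m = n)
    (h : B₁.evalSeq nor = B₂.evalSeq nor) : HEq B₁ B₂ := by
  induction B₁ generalizing n with
  | leaf =>
    cases B₂ with
    | leaf => rfl
    | node P' Q' => have := P'.size_pos; have := Q'.size_pos; omega
  | @node k l P Q ihP ihQ =>
    cases B₂ with
    | leaf => have := P.size_pos; have := Q.size_pos; omega
    | @node k' l' P' Q' =>
      have h' : ∀ f, (P.evalSeq nor f || Q.evalSeq nor fun j => f (k + j)) =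
          (P'.evalSeq nor f || Q'.evalSeq nor fun j => f (k' + j)) := fun f =>
        Bool.not_inj (congrFun h f)
      rcases lt_trichotomy k k' with hlt | rfl | hgt
      · exact (false_of_or_split_lt P Q P' Q' hmn hlt h').elim
      · obtain rfl : l = l' := by omega
        obtain ⟨hP, hQ⟩ := Bool.eq_and_eq_of_or_eq (P.evalSeq_nor_surjective false)
          (Q.evalSeq_nor_surjective false) fun a b => by
            simpa [evalSeq_seqConcat_of_le _ P le_rfl, evalSeq_seqConcat_of_le _ P' le_rfl]
              using h' (seqConcat k a b)
        obtain rfl := eq_of_heq (ihP P' rfl hP)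
        obtain rfl := eq_of_heq (ihQ Q' rfl hQ)
        rfl
      · exact (false_of_or_split_lt P' Q' P Q hmn.symm hgt fun f => (h' f).symm).elim

end Bracketing

/-- Paper's Proposition 4.2: the Sheffer function (NOR) on the two-element set is
Catalan. -/
theorem stmt12 : IsCatalanOp (fun x y : Bool => !(x || y)) := by
  intro n B₁ B₂ hne h
  exact hne (eq_of_heq (B₁.heq_of_evalSeq_nor_eq B₂ rfl (funext fun f => congrFun h _)))
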